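/- arXiv:1703.08358 — 3 statements merged into one kernel-verified Lean document; each statement's English description precedes it below -/
import Mathlib

section
/- Let $f_0\in L^1([0,1])$ and let $\Pi$ be a prior on a Polish space $\Theta$ embedding continuously into $L^1([0,1])$. If for some constants $C>0$ and $A\ge1$ the prior satisfies $\Pi\big(f:\int(f_0-f)\le A\eps_n,\ f\le f_0\big)\ge e^{-Cn\eps_n}$, then $E_{f_0}\big[\Pi\big(f:\int(f_0-f)_+\ge(1+A+C)\eps_n\,\big|\,N\big)\big]\le e^{-n\eps_n}$. In particular, posterior contraction for the one-sided loss $\int(f_0-f)_+$ requires no entropy condition. -/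
open MeasureTheory Real Set Filter
open scoped ENNReal NNReal Topology

noncomputable section

/-- The integral of `f` over `[0,1]`. -/
def intI (f : ℝ → ℝ) : ℝ := ∫ x in Set.Icc (0:ℝ) 1, f x

/-- The `L¹([0,1])` distance between `f` and `g`. -/
def dist1 (f g : ℝ → ℝ) : ℝ := ∫ x in Set.Icc (0:ℝ) 1, |f x - g x|

/-- `∫₀¹ (f-g)₊`. -/
def intPos (f g : ℝ → ℝ) : ℝ := ∫ x in Set.Icc (0:ℝ) 1, max (f x - g x) 0

/-- `f ≤ g` Lebesgue-almost everywhere on `[0,1]`. -/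
def aeLeI (f g : ℝ → ℝ) : Prop :=
  ∀ᵐ x ∂((volume : Measure ℝ).restrict (Set.Icc (0:ℝ) 1)), f x ≤ g x

/-- The intensity measure `λ_f(x,y) = n · 1(f(x) ≤ y)` on `[0,1] × ℝ`. -/
def intensity (n : ℕ) (f : ℝ → ℝ) : Measure (ℝ × ℝ) :=
  ((volume : Measure (ℝ × ℝ)).restrict (Set.Icc (0:ℝ) 1 ×ˢ (Set.univ : Set ℝ))).withDensity
    (fun p => if f p.1 ≤ p.2 then (n : ℝ≥0∞) else 0)

/-- `P` is the law of a Poisson point process with (σ-finite, simple) intensity measure `μ`,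
whose support points are measurably enumerated by `pts`; the law is characterised through its
void probabilities `P(N(A) = 0) = exp(-μ(A))`. -/
def IsPoissonPP {Ω : Type*} [MeasurableSpace Ω] (μ : Measure (ℝ × ℝ)) (P : Measure Ω)
    (pts : Ω → ℕ → ℝ × ℝ) : Prop :=
  IsProbabilityMeasure P ∧ (∀ i, Measurable fun ω => pts ω i) ∧
    ∀ A : Set (ℝ × ℝ), MeasurableSet A →
      P {ω | ∀ i, pts ω i ∉ A} =
        if μ A = ∞ then 0 else ENNReal.ofReal (Real.exp (-(μ A).toReal))

/-- The support boundary detection model: for every `n` and every `f ∈ L¹([0,1])`,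
`P n f` is the law of a Poisson point process with intensity `n · 1(f(x) ≤ y)`,
with support points `(Xᵢ, Yᵢ)ᵢ = pts`. -/
def IsBoundaryModel {Ω : Type*} [MeasurableSpace Ω] (P : ℕ → (ℝ → ℝ) → Measure Ω)
    (pts : Ω → ℕ → ℝ × ℝ) : Prop :=
  ∀ n f, IntegrableOn f (Set.Icc (0:ℝ) 1) → IsPoissonPP (intensity n f) (P n f) pts

/-- The likelihood `e^{n∫f} · 1(∀ i : f(Xᵢ) ≤ Yᵢ)` of `f` given the data `ω`. -/
def lik {Ω : Type*} (n : ℕ) (pts : Ω → ℕ → ℝ × ℝ) (f : ℝ → ℝ) (ω : Ω) : ℝ≥0∞ :=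
  {ω' : Ω | ∀ i, f (pts ω' i).1 ≤ (pts ω' i).2}.indicator
    (fun _ => ENNReal.ofReal (Real.exp (n * intI f))) ω

/-- The posterior mass of the set `B ⊆ Θ` given the data `ω`, for the prior `Pi` on `Θ`
embedded into `L¹([0,1])` via `ι`:
`Π(B | N) = ∫_B e^{n∫f} 1(∀i : f(Xᵢ) ≤ Yᵢ) dΠ(f) / ∫_Θ e^{n∫f} 1(∀i : f(Xᵢ) ≤ Yᵢ) dΠ(f)`. -/
def post {Ω Θ : Type*} [MeasurableSpace Θ] (n : ℕ) (pts : Ω → ℕ → ℝ × ℝ) (Pi : Measure Θ)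
    (ι : Θ → ℝ → ℝ) (B : Set Θ) (ω : Ω) : ℝ≥0∞ :=
  (∫⁻ θ in B, lik n pts (ι θ) ω ∂Pi) / ∫⁻ θ, lik n pts (ι θ) ω ∂Pi

/-- A prior on a Polish space `Θ` which embeds continuously into `L¹([0,1])` via `ι`. -/
def IsL1Prior {Θ : Type*} [MeasurableSpace Θ] [TopologicalSpace Θ] (Pi : Measure Θ)
    (ι : Θ → ℝ → ℝ) : Prop :=
  IsProbabilityMeasure Pi ∧ Measurable (Function.uncurry ι) ∧
    (∀ θ, IntegrableOn (ι θ) (Set.Icc (0:ℝ) 1)) ∧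
    ∀ θ₀, Tendsto (fun θ => dist1 (ι θ) (ι θ₀)) (𝓝 θ₀) (𝓝 0)

/-! By Tonelli and the void probability of the region `{y < f(x)}`, the likelihood of `f` has
mean `E_{f₀}[e^{n∫f} 1(∀ i, f(Xᵢ) ≤ Yᵢ)] = e^{n∫f₀ - n∫(f₀-f)₊}`, so the expected numerator of
the posterior mass of `{∫(f₀-f)₊ ≥ b}` is at most `e^{n∫f₀ - nb}`. For `f ≤ f₀` the likelihood
is bounded by `e^{n∫f}` and has exactly this mean, so almost surely the bound is attained in
`Π`-integrated form over the small-ball set; the denominator is therefore a.s. at least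
`e^{n∫f₀ - nAεₙ} e^{-Cnεₙ}`, and the ratio is `e^{-nεₙ}` for `b = (1+A+C)εₙ`. -/

local notation "vol₀₁" => Measure.restrict (volume : Measure ℝ) (Set.Icc (0:ℝ) 1)

section Integrals

variable {f g h : ℝ → ℝ}

lemma intI_congr_ae (hfg : f =ᵐ[vol₀₁] g) : intI f = intI g :=
  integral_congr_ae hfg

lemma intPos_congr_ae_left (hfg : f =ᵐ[vol₀₁] g) (h : ℝ → ℝ) : intPos f h = intPos g h :=
  intI_congr_ae (hfg.mono fun x hx => by simp only [hx])

lemma intI_sub (hf : IntegrableOn f (Icc 0 1)) (hg : IntegrableOn g (Icc 0 1)) :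
    intI (fun x => f x - g x) = intI f - intI g :=
  integral_sub hf hg

lemma intI_sub_intPos_comm (hf : IntegrableOn f (Icc 0 1)) (hg : IntegrableOn g (Icc 0 1)) :
    intI f - intPos f g = intI g - intPos g f := by
  have hfg : intPos f g - intPos g f = intI f - intI g := by
    have hfg_pos : IntegrableOn (fun x => max (f x - g x) 0) (Icc 0 1) := (hf.sub hg).pos_part
    have hgf_pos : IntegrableOn (fun x => max (g x - f x) 0) (Icc 0 1) := (hg.sub hf).pos_part
    rw [intPos, intPos, intI, intI, ← integral_sub hfg_pos hgf_pos, ← integral_sub hf hg]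
    refine integral_congr_ae (ae_of_all _ fun x => ?_)
    rcases le_total (f x) (g x) with hx | hx <;> simp [hx]
  linarith

lemma intPos_eq_zero_of_aeLeI (hfg : aeLeI f g) : intPos f g = 0 :=
  integral_eq_zero_of_ae (hfg.mono fun x hx => by simpa using hx)

lemma intI_le_of_aeLeI (hfg : aeLeI f g) (hf : IntegrableOn f (Icc 0 1))
    (hg : IntegrableOn g (Icc 0 1)) : intI f ≤ intI g :=
  integral_mono_ae hf hg hfg

lemma aeLeI_congr_right (hgh : g =ᵐ[vol₀₁] h) : aeLeI f g ↔ aeLeI f h := by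
  constructor <;> intro hf <;> filter_upwards [hf, hgh] with x hx hx' <;> linarith

lemma measurable_intI {Θ : Type*} [MeasurableSpace Θ] {F : Θ → ℝ → ℝ}
    (hF : Measurable (Function.uncurry F)) : Measurable fun θ => intI (F θ) :=
  hF.stronglyMeasurable.integral_prod_right'.measurable

end Integrals

section Intensity

variable {f g h : ℝ → ℝ}

lemma volume_restrict_Icc_prod_univ :
    (volume : Measure (ℝ × ℝ)).restrict (Icc (0:ℝ) 1 ×ˢ univ) = (vol₀₁).prod volume := by
  rw [Measure.volume_eq_prod, ← Measure.prod_restrict, Measure.restrict_univ]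

lemma intensity_congr_ae (n : ℕ) (hfg : f =ᵐ[vol₀₁] g) : intensity n f = intensity n g := by
  refine withDensity_congr_ae ?_
  rw [volume_restrict_Icc_prod_univ]
  filter_upwards [Measure.quasiMeasurePreserving_fst.ae_eq_comp hfg] with p hp
  simp only [Function.comp_apply] at hp
  rw [hp]

lemma intensity_setOf_lt (n : ℕ) (hg : Measurable g) (hh : Measurable h) :
    intensity n g {p | p.2 < h p.1} = n * ∫⁻ x in Icc 0 1, ENNReal.ofReal (h x - g x) := by
  have hR : MeasurableSet {p : ℝ × ℝ | g p.1 ≤ p.2} :=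
    measurableSet_le (hg.comp measurable_fst) measurable_snd
  have hA : MeasurableSet {p : ℝ × ℝ | p.2 < h p.1} :=
    measurableSet_lt measurable_snd (hh.comp measurable_fst)
  have hdens : (fun p : ℝ × ℝ => if g p.1 ≤ p.2 then (n : ℝ≥0∞) else 0)
      = {p : ℝ × ℝ | g p.1 ≤ p.2}.indicator fun _ => (n : ℝ≥0∞) := by
    funext p; simp [indicator_apply]
  have hslice : ∀ x, volume (Prod.mk x ⁻¹' ({p : ℝ × ℝ | p.2 < h p.1} ∩ {p | g p.1 ≤ p.2}))
      = ENNReal.ofReal (h x - g x) := by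
    intro x
    have : Prod.mk x ⁻¹' ({p : ℝ × ℝ | p.2 < h p.1} ∩ {p | g p.1 ≤ p.2}) = Ico (g x) (h x) := by
      ext y; simp [and_comm]
    rw [this, Real.volume_Ico]
  rw [intensity, hdens, withDensity_indicator hR, withDensity_const, Measure.smul_apply,
    Measure.restrict_apply hA, volume_restrict_Icc_prod_univ,
    Measure.prod_apply (hA.inter hR), smul_eq_mul]
  simp_rw [hslice]

end Intensity

section Likelihood

variable {Ω : Type*} {n : ℕ} {pts : Ω → ℕ → ℝ × ℝ} {g h : ℝ → ℝ}

lemma lik_le (ω : Ω) : lik n pts h ω ≤ ENNReal.ofReal (exp (n * intI h)) :=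
  indicator_le_self _ _ _

variable [MeasurableSpace Ω] {Q : Measure Ω}

lemma measurable_ofReal_exp_mul_intI {Θ : Type*} [MeasurableSpace Θ] {ι : Θ → ℝ → ℝ}
    (hι : Measurable (Function.uncurry ι)) :
    Measurable fun θ => ENNReal.ofReal (exp (n * intI (ι θ))) :=
  ENNReal.measurable_ofReal.comp (measurable_exp.comp ((measurable_intI hι).const_mul _))

lemma measurable_lik {Θ : Type*} [MeasurableSpace Θ] {ι : Θ → ℝ → ℝ}
    (hι : Measurable (Function.uncurry ι)) (hpts : ∀ i, Measurable fun ω => pts ω i) :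
    Measurable fun q : Ω × Θ => lik n pts (ι q.2) q.1 := by
  simp only [lik]
  refine Measurable.ite (measurableSet_setOfPred.2 (Measurable.forall fun i => ?_)) ?_
    measurable_const
  · have hp : Measurable fun q : Ω × Θ => pts q.1 i := (hpts i).comp measurable_fst
    exact measurableSet_setOfPred.1
      (measurableSet_le (hι.comp (measurable_snd.prodMk hp.fst)) hp.snd)
  · exact (measurable_ofReal_exp_mul_intI hι).comp measurable_snd

lemma lintegral_ofReal_sub_eq_intPos (hg : IntegrableOn g (Icc 0 1))
    (hh : IntegrableOn h (Icc 0 1)) :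
    ∫⁻ x in Icc 0 1, ENNReal.ofReal (h x - g x) = ENNReal.ofReal (intPos h g) := by
  have hhg_pos : IntegrableOn (fun x => max (h x - g x) 0) (Icc 0 1) := (hh.sub hg).pos_part
  rw [intPos, ofReal_integral_eq_lintegral_ofReal hhg_pos (ae_of_all _ fun _ => le_max_right _ _)]
  simp

theorem IsPoissonPP.lintegral_lik (hQ : IsPoissonPP (intensity n g) Q pts) (hg : Measurable g)
    (hgi : IntegrableOn g (Icc 0 1)) (hh : Measurable h) (hhi : IntegrableOn h (Icc 0 1)) :
    ∫⁻ ω, lik n pts h ω ∂Q = ENNReal.ofReal (exp (n * intI h - n * intPos h g)) := by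
  have hA : MeasurableSet {p : ℝ × ℝ | p.2 < h p.1} :=
    measurableSet_lt measurable_snd (hh.comp measurable_fst)
  have hE : {ω | ∀ i, h (pts ω i).1 ≤ (pts ω i).2} = {ω | ∀ i, pts ω i ∉ {p | p.2 < h p.1}} := by
    ext ω; simp
  have hEm : MeasurableSet {ω | ∀ i, h (pts ω i).1 ≤ (pts ω i).2} :=
    measurableSet_setOfPred.2 (Measurable.forall fun i => measurableSet_setOfPred.1
      (measurableSet_le (hh.comp (hQ.2.1 i).fst) (hQ.2.1 i).snd))
  have hμA : intensity n g {p | p.2 < h p.1} = ENNReal.ofReal (n * intPos h g) := by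
    rw [intensity_setOf_lt n hg hh, lintegral_ofReal_sub_eq_intPos hgi hhi,
      ENNReal.ofReal_mul n.cast_nonneg, ENNReal.ofReal_natCast]
  have hpos : 0 ≤ n * intPos h g :=
    mul_nonneg n.cast_nonneg (setIntegral_nonneg measurableSet_Icc fun _ _ => le_max_right _ _)
  unfold lik
  rw [lintegral_indicator_const hEm, hE, hQ.2.2 _ hA, hμA, if_neg ENNReal.ofReal_ne_top,
    ENNReal.toReal_ofReal hpos, ← ENNReal.ofReal_mul (exp_nonneg _), ← exp_add, sub_eq_add_neg]

end Likelihood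

lemma lintegral_div_le_of_ae_le {α : Type*} [MeasurableSpace α] {μ : Measure α}
    {N D : α → ℝ≥0∞} {M K : ℝ≥0∞} (hK : K ≠ 0) (hN : ∫⁻ a, N a ∂μ ≤ M)
    (hD : ∀ᵐ a ∂μ, K ≤ D a) : ∫⁻ a, N a / D a ∂μ ≤ M / K :=
  calc ∫⁻ a, N a / D a ∂μ ≤ ∫⁻ a, N a * K⁻¹ ∂μ :=
        lintegral_mono_ae (hD.mono fun _ ha => ENNReal.div_le_div_left ha _)
    _ = (∫⁻ a, N a ∂μ) * K⁻¹ := lintegral_mul_const' _ _ (ENNReal.inv_ne_top.2 hK)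
    _ ≤ M / K := mul_le_mul_left hN _

section Posterior

variable {Ω Θ : Type*} [MeasurableSpace Ω] [MeasurableSpace Θ] {n : ℕ} {pts : Ω → ℕ → ℝ × ℝ}
  {Q : Measure Ω} {g : ℝ → ℝ} {Pi : Measure Θ} {ι : Θ → ℝ → ℝ}

theorem IsPoissonPP.lintegral_setLIntegral_lik_le [SFinite Pi]
    (hQ : IsPoissonPP (intensity n g) Q pts) (hg : Measurable g) (hgi : IntegrableOn g (Icc 0 1))
    (hι : Measurable (Function.uncurry ι)) (hιi : ∀ θ, IntegrableOn (ι θ) (Icc 0 1)) (b : ℝ) :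
    ∫⁻ ω, ∫⁻ θ in {θ | b ≤ intPos g (ι θ)}, lik n pts (ι θ) ω ∂Pi ∂Q
      ≤ ENNReal.ofReal (exp (n * intI g - n * b)) * Pi {θ | b ≤ intPos g (ι θ)} := by
  have := hQ.1
  rw [lintegral_lintegral_swap (measurable_lik hι hQ.2.1).aemeasurable, ← setLIntegral_const]
  refine setLIntegral_mono measurable_const fun θ hθ => ?_
  rw [hQ.lintegral_lik hg hgi hι.of_uncurry_left (hιi θ), ← mul_sub,
    intI_sub_intPos_comm (hιi θ) hgi, mul_sub]
  exact ENNReal.ofReal_le_ofReal (exp_le_exp.2 (by gcongr; exact hθ))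

theorem IsPoissonPP.ae_setLIntegral_exp_le_setLIntegral_lik [IsFiniteMeasure Pi]
    (hQ : IsPoissonPP (intensity n g) Q pts) (hg : Measurable g) (hgi : IntegrableOn g (Icc 0 1))
    (hι : Measurable (Function.uncurry ι)) (hιi : ∀ θ, IntegrableOn (ι θ) (Icc 0 1))
    {S : Set Θ} (hS : ∀ θ ∈ S, aeLeI (ι θ) g) :
    ∀ᵐ ω ∂Q, ∫⁻ θ in S, ENNReal.ofReal (exp (n * intI (ι θ))) ∂Pi
      ≤ ∫⁻ θ in S, lik n pts (ι θ) ω ∂Pi := by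
  have := hQ.1
  set G := ∫⁻ θ in S, ENNReal.ofReal (exp (n * intI (ι θ))) ∂Pi
  have hle : ∀ ω, ∫⁻ θ in S, lik n pts (ι θ) ω ∂Pi ≤ G := fun ω =>
    setLIntegral_mono (measurable_ofReal_exp_mul_intI hι) fun θ _ => lik_le ω
  have hmean : ∫⁻ ω, ∫⁻ θ in S, lik n pts (ι θ) ω ∂Pi ∂Q = G := by
    refine le_antisymm ((lintegral_mono hle).trans (by simp)) ?_
    rw [lintegral_lintegral_swap (measurable_lik hι hQ.2.1).aemeasurable]
    refine setLIntegral_mono (measurable_lik hι hQ.2.1).lintegral_prod_left' fun θ hθ => ?_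
    rw [hQ.lintegral_lik hg hgi hι.of_uncurry_left (hιi θ),
      intPos_eq_zero_of_aeLeI (hS θ hθ), mul_zero, sub_zero]
  have hG : G ≠ ∞ := by
    refine ne_top_of_le_ne_top (b := ENNReal.ofReal (exp (n * intI g)) * Pi S)
      (ENNReal.mul_ne_top ENNReal.ofReal_ne_top (measure_ne_top Pi S)) ?_
    rw [← setLIntegral_const]
    refine setLIntegral_mono measurable_const fun θ hθ => ?_
    exact ENNReal.ofReal_le_ofReal (exp_le_exp.2 (by
      gcongr; exact intI_le_of_aeLeI (hS θ hθ) (hιi θ) hgi))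
  have hae := ae_eq_of_ae_le_of_lintegral_le (ae_of_all _ hle) (hmean ▸ hG) aemeasurable_const
    (by simp [hmean])
  exact hae.mono fun ω hω => hω.ge

theorem IsPoissonPP.lintegral_post_le [IsProbabilityMeasure Pi]
    (hQ : IsPoissonPP (intensity n g) Q pts) (hg : Measurable g) (hgi : IntegrableOn g (Icc 0 1))
    (hι : Measurable (Function.uncurry ι)) (hιi : ∀ θ, IntegrableOn (ι θ) (Icc 0 1)) {a b c : ℝ}
    (hsmall : ENNReal.ofReal (exp (-c)) ≤
      Pi {θ | intI (fun x => g x - ι θ x) ≤ a ∧ aeLeI (ι θ) g}) :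
    ∫⁻ ω, post n pts Pi ι {θ | b ≤ intPos g (ι θ)} ω ∂Q ≤
      ENNReal.ofReal (exp (c + n * a - n * b)) := by
  set S := {θ | intI (fun x => g x - ι θ x) ≤ a ∧ aeLeI (ι θ) g}
  have hden : ∀ᵐ ω ∂Q, ENNReal.ofReal (exp (n * intI g - n * a - c)) ≤
      ∫⁻ θ, lik n pts (ι θ) ω ∂Pi := by
    filter_upwards [hQ.ae_setLIntegral_exp_le_setLIntegral_lik hg hgi hι hιi (Pi := Pi) (S := S)
      fun θ hθ => hθ.2] with ω hω
    calc ENNReal.ofReal (exp (n * intI g - n * a - c))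
        = ENNReal.ofReal (exp (n * intI g - n * a)) * ENNReal.ofReal (exp (-c)) := by
          rw [← ENNReal.ofReal_mul (exp_nonneg _), ← exp_add, sub_eq_add_neg]
      _ ≤ ENNReal.ofReal (exp (n * intI g - n * a)) * Pi S := by gcongr
      _ = ∫⁻ _ in S, ENNReal.ofReal (exp (n * intI g - n * a)) ∂Pi := (setLIntegral_const _ _).symm
      _ ≤ ∫⁻ θ in S, ENNReal.ofReal (exp (n * intI (ι θ))) ∂Pi := by
          refine setLIntegral_mono (measurable_ofReal_exp_mul_intI hι) fun θ hθ => ?_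
          have hθa : intI g - intI (ι θ) ≤ a := intI_sub hgi (hιi θ) ▸ hθ.1
          exact ENNReal.ofReal_le_ofReal (exp_le_exp.2 (by rw [← mul_sub]; gcongr; linarith))
      _ ≤ ∫⁻ θ in S, lik n pts (ι θ) ω ∂Pi := hω
      _ ≤ ∫⁻ θ, lik n pts (ι θ) ω ∂Pi := setLIntegral_le_lintegral _ _
  have hnum := (hQ.lintegral_setLIntegral_lik_le hg hgi hι hιi b).trans
    (mul_le_of_le_one_right' (prob_le_one (μ := Pi)))
  calc ∫⁻ ω, post n pts Pi ι {θ | b ≤ intPos g (ι θ)} ω ∂Q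
      ≤ ENNReal.ofReal (exp (n * intI g - n * b)) /
          ENNReal.ofReal (exp (n * intI g - n * a - c)) :=
        lintegral_div_le_of_ae_le (by simp [exp_pos]) hnum hden
    _ = ENNReal.ofReal (exp (c + n * a - n * b)) := by
        rw [← ENNReal.ofReal_div_of_pos (exp_pos _), ← exp_sub]
        ring_nf

end Posterior

theorem stmt_4_general {Ω Θ : Type*} [MeasurableSpace Ω] [MeasurableSpace Θ] [TopologicalSpace Θ]
    (P : ℕ → (ℝ → ℝ) → Measure Ω) (pts : Ω → ℕ → ℝ × ℝ)
    (hmodel : IsBoundaryModel P pts)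
    (f0 : ℝ → ℝ) (hf0 : IntegrableOn f0 (Set.Icc (0:ℝ) 1))
    (Pi : Measure Θ) (ι : Θ → ℝ → ℝ) (hprior : IsL1Prior Pi ι)
    (C A : ℝ) (ε : ℕ → ℝ)
    (hsmall : ∀ n : ℕ, ENNReal.ofReal (Real.exp (-C * n * ε n)) ≤
      Pi {θ | intI (fun x => f0 x - ι θ x) ≤ A * ε n ∧ aeLeI (ι θ) f0}) :
    ∀ n : ℕ,
      ∫⁻ ω, post n pts Pi ι {θ | (1 + A + C) * ε n ≤ intPos f0 (ι θ)} ω ∂(P n f0) ≤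
        ENNReal.ofReal (Real.exp (-(n : ℝ) * ε n)) := by
  intro n
  obtain ⟨hPi, hι, hιi, -⟩ := hprior
  set g := hf0.aemeasurable.mk f0
  have hfg : f0 =ᵐ[vol₀₁] g := hf0.aemeasurable.ae_eq_mk
  have hQ : IsPoissonPP (intensity n g) (P n f0) pts := intensity_congr_ae n hfg ▸ hmodel n f0 hf0
  have hS : {θ | intI (fun x => f0 x - ι θ x) ≤ A * ε n ∧ aeLeI (ι θ) f0} =
      {θ | intI (fun x => g x - ι θ x) ≤ A * ε n ∧ aeLeI (ι θ) g} := by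
    ext θ
    have hθ : intI (fun x => f0 x - ι θ x) = intI (fun x => g x - ι θ x) :=
      intI_congr_ae (hfg.mono fun x hx => by simp only [hx])
    exact and_congr (by rw [hθ]) (aeLeI_congr_right hfg)
  simp only [intPos_congr_ae_left hfg]
  calc _ ≤ ENNReal.ofReal (exp (C * n * ε n + n * (A * ε n) - n * ((1 + A + C) * ε n))) :=
        hQ.lintegral_post_le hf0.aemeasurable.measurable_mk (hf0.congr hfg) hι hιi
          (by rw [← hS, ← neg_mul, ← neg_mul]; exact hsmall n)
    _ = _ := by ring_nf

/-- Proposition 2.4: one-sided contraction from the small ball probability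
alone, no entropy condition.
If `Π(f : ∫(f₀ - f) ≤ A εₙ, f ≤ f₀) ≥ e^{-C n εₙ}` for constants `C > 0`, `A ≥ 1`, then
`E_{f₀}[Π(f : ∫(f₀ - f)₊ ≥ (1 + A + C) εₙ | N)] ≤ e^{-n εₙ}`. -/
theorem stmt_4 {Ω Θ : Type*} [MeasurableSpace Ω] [MeasurableSpace Θ] [TopologicalSpace Θ]
    [PolishSpace Θ] [BorelSpace Θ]
    (P : ℕ → (ℝ → ℝ) → Measure Ω) (pts : Ω → ℕ → ℝ × ℝ)
    (hmodel : IsBoundaryModel P pts)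
    (f0 : ℝ → ℝ) (hf0 : IntegrableOn f0 (Set.Icc (0:ℝ) 1))
    (Pi : Measure Θ) (ι : Θ → ℝ → ℝ) (hprior : IsL1Prior Pi ι)
    (C A : ℝ) (hC : 0 < C) (hA : 1 ≤ A) (ε : ℕ → ℝ) (hεpos : ∀ n, 0 < ε n)
    (hsmall : ∀ n : ℕ, ENNReal.ofReal (Real.exp (-C * n * ε n)) ≤
      Pi {θ | intI (fun x => f0 x - ι θ x) ≤ A * ε n ∧ aeLeI (ι θ) f0}) :
    ∀ n : ℕ,
      ∫⁻ ω, post n pts Pi ι {θ | (1 + A + C) * ε n ≤ intPos f0 (ι θ)} ω ∂(P n f0) ≤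
        ENNReal.ofReal (Real.exp (-(n : ℝ) * ε n)) :=
  stmt_4_general P pts hmodel f0 hf0 Pi ι hprior C A ε hsmall

end
end

section
/- For any $f_0\in L^1([0,1])$, any subset $\Theta_n\subset L^1([0,1])$, any $\eps>0$ and any $n\ge1$, the following chain of inequalities holds: $S_[\big(n,\{f\in\Theta_n:\int(f-f_0)_+\ge\eps\},f_0\big)\le e^{-n\eps/2}\,N_[(\eps/2,\Theta_n)\le e^{-n\eps/2}\,N(\eps/4,\Theta_n,\|\cdot\|_\infty)$. -/
open MeasureTheory Real Set Filter
open scoped ENNReal NNReal Topology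

noncomputable section

/-- The `ε`-covering number of a class `F` of functions with respect to the supremum norm
on `[0,1]` (with measurable centres). -/
def supCover (ε : ℝ) (F : Set (ℝ → ℝ)) : ℕ∞ :=
  ⨅ (G : Finset (ℝ → ℝ)) (_ : (∀ g ∈ G, Measurable g) ∧
      ∀ f ∈ F, ∃ g ∈ G, ∀ x ∈ Set.Icc (0:ℝ) 1, |f x - g x| ≤ ε),
    (G.card : ℕ∞)

/-- The one-sided bracketing number `N_[(δ, F)`: the smallest number of functions
`ℓ₁, …, ℓ_M ∈ L¹([0,1])` such that every `f ∈ F` admits some `j` with `ℓ_j ≤ f` and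
`∫ (f - ℓ_j) ≤ δ`. -/
def bracketNum (δ : ℝ) (F : Set (ℝ → ℝ)) : ℕ∞ :=
  ⨅ (G : Finset (ℝ → ℝ)) (_ : (∀ l ∈ G, IntegrableOn l (Set.Icc (0:ℝ) 1)) ∧
      ∀ f ∈ F, ∃ l ∈ G, aeLeI l f ∧ intI (fun x => f x - l x) ≤ δ),
    (G.card : ℕ∞)

/-- The separation quantity `S_[(n, F, f₀) = inf_{(ℓ_j)_{j ∈ J}} Σ_{j ∈ J} e^{-n ∫ (ℓ_j - f₀)₊}`,
the infimum over countable families `(ℓ_j)_{j ∈ J} ⊆ L¹([0,1])` such that every `f ∈ F`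
admits some `j ∈ J` with `ℓ_j ≤ f`. -/
def sepQ (n : ℕ) (F : Set (ℝ → ℝ)) (f0 : ℝ → ℝ) : ℝ≥0∞ :=
  ⨅ (l : ℕ → ℝ → ℝ) (J : Set ℕ)
    (_ : (∀ j ∈ J, IntegrableOn (l j) (Set.Icc (0:ℝ) 1)) ∧ ∀ f ∈ F, ∃ j ∈ J, aeLeI (l j) f),
    ∑' j : J, ENNReal.ofReal (Real.exp (-(n : ℝ) * intPos (l (j : ℕ)) f0))

/-!
Pick a finite one-sided bracketing `ℓ₁, …, ℓ_M` of `Θₙ` of size `ε/2`. If `ℓ ≤ f` then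
`(f - f₀)₊ ≤ (ℓ - f₀)₊ + (f - ℓ)`, so a bracket below some `f` with `∫(f - f₀)₊ ≥ ε` satisfies
`∫(ℓ - f₀)₊ ≥ ε/2`; the brackets of this kind form an admissible family for `S_[` whose sum is at
most `M e^{-nε/2}`. Conversely, the centres `g` of a sup-norm `ε/4`-cover give the lower brackets
`g - ε/4` of size `ε/2`.
-/

open Finset

lemma intPos_le_intPos_add_intI {f l f0 : ℝ → ℝ} (hf : IntegrableOn f (Icc 0 1))
    (hl : IntegrableOn l (Icc 0 1)) (hf0 : IntegrableOn f0 (Icc 0 1)) (hle : aeLeI l f) :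
    intPos f f0 ≤ intPos l f0 + intI (fun x => f x - l x) := by
  have hpos : ∀ x, l x ≤ f x →
      max (f x - f0 x) 0 ≤ max (l x - f0 x) 0 + (f x - l x) := fun x hx =>
    max_le (by linarith [le_max_left (l x - f0 x) 0]) (by linarith [le_max_right (l x - f0 x) 0])
  calc intPos f f0 ≤ ∫ x in Icc (0:ℝ) 1, (max (l x - f0 x) 0 + (f x - l x)) :=
        integral_mono_ae (hf.sub hf0).pos_part ((hl.sub hf0).pos_part.add (hf.sub hl))
          (hle.mono hpos)
    _ = intPos l f0 + intI (fun x => f x - l x) :=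
        integral_add (hl.sub hf0).pos_part (hf.sub hl)

lemma intI_le_of_forall_le {f : ℝ → ℝ} {c : ℝ} (hf : IntegrableOn f (Icc 0 1))
    (h : ∀ x ∈ Icc (0:ℝ) 1, f x ≤ c) : intI f ≤ c := by
  calc intI f ≤ ∫ _ in Icc (0:ℝ) 1, c :=
        setIntegral_mono_on hf (integrableOn_const measure_Icc_lt_top.ne) measurableSet_Icc h
    _ = c := by simp

lemma IntegrableOn.of_forall_abs_sub_le {f g : ℝ → ℝ} {δ : ℝ} (hf : IntegrableOn f (Icc 0 1))
    (hg : Measurable g) (h : ∀ x ∈ Icc (0:ℝ) 1, |f x - g x| ≤ δ) :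
    IntegrableOn g (Icc 0 1) := by
  refine Integrable.mono' (hf.abs.add (integrableOn_const measure_Icc_lt_top.ne))
    hg.aestronglyMeasurable ?_
  filter_upwards [ae_restrict_mem measurableSet_Icc] with x hx
  have := abs_sub_abs_le_abs_sub (g x) (f x)
  rw [abs_sub_comm] at this
  show |g x| ≤ |f x| + δ
  linarith [h x hx]

lemma sepQ_le_sum {n : ℕ} {F : Set (ℝ → ℝ)} {f0 : ℝ → ℝ} (G : Finset (ℝ → ℝ))
    (hG : ∀ l ∈ G, IntegrableOn l (Icc 0 1)) (hcov : ∀ f ∈ F, ∃ l ∈ G, aeLeI l f) :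
    sepQ n F f0 ≤ ∑ l ∈ G, ENNReal.ofReal (exp (-(n : ℝ) * intPos l f0)) := by
  set w : (ℝ → ℝ) → ℝ≥0∞ := fun l => ENNReal.ofReal (exp (-(n : ℝ) * intPos l f0))
  set e := G.equivFin.symm
  set l : ℕ → ℝ → ℝ := fun j => if h : j < G.card then e ⟨j, h⟩ else 0
  have hl : ∀ i : Fin G.card, l i = e i := fun i => dif_pos i.isLt
  have hfamily : (∀ j ∈ (Finset.range G.card : Set ℕ), IntegrableOn (l j) (Icc 0 1)) ∧
      ∀ f ∈ F, ∃ j ∈ (Finset.range G.card : Set ℕ), aeLeI (l j) f := by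
    refine ⟨fun j hj => ?_, fun f hf => ?_⟩
    · have hj : j < G.card := by simpa using hj
      exact hl ⟨j, hj⟩ ▸ hG _ (e _).2
    · obtain ⟨l₀, hl₀, hle⟩ := hcov f hf
      refine ⟨e.symm ⟨l₀, hl₀⟩, by simp, ?_⟩
      rwa [hl, e.apply_symm_apply]
  calc sepQ n F f0 ≤ ∑' j : (Finset.range G.card : Set ℕ), w (l j) :=
        iInf_le_of_le l (iInf_le_of_le _ (iInf_le _ hfamily))
    _ = ∑ j ∈ Finset.range G.card, w (l j) := Finset.tsum_subtype' _ (fun j => w (l j))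
    _ = ∑ i : Fin G.card, w (e i) := by simp only [Finset.sum_range, hl]
    _ = ∑ x : G, w x := Equiv.sum_comp e (fun x : G => w x)
    _ = ∑ l ∈ G, w l := Finset.sum_coe_sort G w

lemma sepQ_le_mul_bracketNum {n : ℕ} {F : Set (ℝ → ℝ)} {f0 : ℝ → ℝ}
    (hf0 : IntegrableOn f0 (Icc 0 1)) (hF : ∀ f ∈ F, IntegrableOn f (Icc 0 1)) (δ η : ℝ) :
    sepQ n {f ∈ F | δ + η ≤ intPos f f0} f0 ≤
      ENNReal.ofReal (exp (-(n : ℝ) * δ)) * (bracketNum η F : ℝ≥0∞) := by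
  classical
  set c := ENNReal.ofReal (exp (-(n : ℝ) * δ))
  have hc : c ≠ 0 := (ENNReal.ofReal_pos.mpr (exp_pos _)).ne'
  simp only [bracketNum, ENat.toENNReal_iInf, ENNReal.mul_iInf_of_ne hc ENNReal.ofReal_ne_top]
  refine le_iInf₂ fun G ⟨hGint, hGbr⟩ => ?_
  set G' := G.filter fun l => δ ≤ intPos l f0
  have hcov : ∀ f ∈ {f ∈ F | δ + η ≤ intPos f f0}, ∃ l ∈ G', aeLeI l f := by
    rintro f ⟨hfF, hfar⟩
    obtain ⟨l, hlG, hle, hsize⟩ := hGbr f hfF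
    have := intPos_le_intPos_add_intI (hF f hfF) (hGint l hlG) hf0 hle
    exact ⟨l, mem_filter.2 ⟨hlG, by linarith⟩, hle⟩
  calc sepQ n {f ∈ F | δ + η ≤ intPos f f0} f0
      ≤ ∑ l ∈ G', ENNReal.ofReal (exp (-(n : ℝ) * intPos l f0)) :=
        sepQ_le_sum G' (fun l hl => hGint l (mem_filter.1 hl).1) hcov
    _ ≤ G'.card • c := by
        refine sum_le_card_nsmul _ _ _ fun l hl => ENNReal.ofReal_le_ofReal (exp_le_exp.2 ?_)
        have := (mem_filter.1 hl).2
        simp only [neg_mul, neg_le_neg_iff]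
        exact mul_le_mul_of_nonneg_left this n.cast_nonneg
    _ ≤ c * (G.card : ℕ∞) := by
        rw [nsmul_eq_mul, mul_comm]
        gcongr
        exact_mod_cast card_filter_le _ _

lemma bracketNum_le_supCover {F : Set (ℝ → ℝ)} (hF : ∀ f ∈ F, IntegrableOn f (Icc 0 1))
    {δ η : ℝ} (hδη : 2 * δ ≤ η) : bracketNum η F ≤ supCover δ F := by
  classical
  have hconst : IntegrableOn (fun _ : ℝ => δ) (Icc 0 1) := integrableOn_const measure_Icc_lt_top.ne
  refine le_iInf₂ fun G ⟨hGmeas, hGcov⟩ => ?_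
  set G' := (G.filter fun g => IntegrableOn g (Icc 0 1)).image fun g x => g x - δ
  have hG' : (∀ l ∈ G', IntegrableOn l (Icc 0 1)) ∧
      ∀ f ∈ F, ∃ l ∈ G', aeLeI l f ∧ intI (fun x => f x - l x) ≤ η := by
    refine ⟨fun l hl => ?_, fun f hf => ?_⟩
    · obtain ⟨g, hg, rfl⟩ := mem_image.1 hl
      exact (mem_filter.1 hg).2.sub hconst
    · obtain ⟨g, hgG, hfg⟩ := hGcov f hf
      have hg := IntegrableOn.of_forall_abs_sub_le (hF f hf) (hGmeas g hgG) hfg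
      refine ⟨fun x => g x - δ, mem_image.2 ⟨g, mem_filter.2 ⟨hgG, hg⟩, rfl⟩, ?_, ?_⟩
      · filter_upwards [ae_restrict_mem measurableSet_Icc] with x hx
        linarith [(abs_le.1 (hfg x hx)).1]
      · refine intI_le_of_forall_le ((hF f hf).sub (hg.sub hconst)) fun x hx => ?_
        linarith [(abs_le.1 (hfg x hx)).2]
  calc bracketNum η F ≤ G'.card := iInf₂_le G' hG'
    _ ≤ G.card := by exact_mod_cast card_image_le.trans (card_filter_le _ _)

theorem stmt_7_general (n : ℕ) (f0 : ℝ → ℝ)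
    (hf0 : IntegrableOn f0 (Set.Icc (0:ℝ) 1))
    (Θn : Set (ℝ → ℝ)) (hΘn : ∀ f ∈ Θn, IntegrableOn f (Set.Icc (0:ℝ) 1))
    (ε : ℝ) :
    sepQ n {f ∈ Θn | ε ≤ intPos f f0} f0 ≤
        ENNReal.ofReal (Real.exp (-(n : ℝ) * ε / 2)) * (bracketNum (ε / 2) Θn : ℝ≥0∞) ∧
      ENNReal.ofReal (Real.exp (-(n : ℝ) * ε / 2)) * (bracketNum (ε / 2) Θn : ℝ≥0∞) ≤
        ENNReal.ofReal (Real.exp (-(n : ℝ) * ε / 2)) * (supCover (ε / 4) Θn : ℝ≥0∞) := by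
  refine ⟨?_, ?_⟩
  · have h := sepQ_le_mul_bracketNum (n := n) hf0 hΘn (ε / 2) (ε / 2)
    rwa [add_halves, ← mul_div_assoc] at h
  · gcongr
    exact bracketNum_le_supCover hΘn (by linarith)

/-- chain of inequalities between the separation quantity, the one-sided
bracketing number and the sup-norm covering number:
`S_[(n, {f ∈ Θₙ : ∫(f-f₀)₊ ≥ ε}, f₀) ≤ e^{-nε/2} N_[(ε/2, Θₙ) ≤ e^{-nε/2} N(ε/4, Θₙ, ‖·‖_∞)`. -/
theorem stmt_7 (n : ℕ) (hn : 1 ≤ n) (f0 : ℝ → ℝ)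
    (hf0 : IntegrableOn f0 (Set.Icc (0:ℝ) 1))
    (Θn : Set (ℝ → ℝ)) (hΘn : ∀ f ∈ Θn, IntegrableOn f (Set.Icc (0:ℝ) 1))
    (ε : ℝ) (hε : 0 < ε) :
    sepQ n {f ∈ Θn | ε ≤ intPos f f0} f0 ≤
        ENNReal.ofReal (Real.exp (-(n : ℝ) * ε / 2)) * (bracketNum (ε / 2) Θn : ℝ≥0∞) ∧
      ENNReal.ofReal (Real.exp (-(n : ℝ) * ε / 2)) * (bracketNum (ε / 2) Θn : ℝ≥0∞) ≤
        ENNReal.ofReal (Real.exp (-(n : ℝ) * ε / 2)) * (supCover (ε / 4) Θn : ℝ≥0∞) :=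
  stmt_7_general n f0 hf0 Θn hΘn ε

end
end

section
/- Let $f_0\in L^1([0,1])$ and let $\Pi$ be a prior on a Polish space $\Theta$ embedding continuously into $L^1([0,1])$. Assume $\Theta_n\subseteq\Theta$ contains $f_0$ and is closed under pairwise maxima (if $f,g\in\Theta_n$ then $f\vee g\in\Theta_n$), and that the maximum likelihood estimator $\widehat f^{\mathrm{MLE}}$ over the parameter space $\Theta_n$ exists. Then for every $\eps_n>0$, $E_{f_0}\big[\Pi\big(f\in\Theta_n:\int(f-f_0)_+>\eps_n\,\big|\,N\big)\big]\le P_{f_0}\big(\int(\widehat f^{\mathrm{MLE}}-f_0)_+>\eps_n\big)$. -/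
open MeasureTheory Real Set Filter
open scoped ENNReal NNReal Topology

noncomputable section

/-! Under `P_{f₀}` the data almost surely lie above `f₀`, since the intensity vanishes below the
graph of `f₀`. On that event, a function `f` compatible with the data can be replaced by the
compatible function `f ∨ f₀ ∈ Θₙ`, whose likelihood is `e^{n ∫ f₀ + n ∫ (f - f₀)₊}`. The MLE is at
least as likely, hence `∫ (f̂ - f₀)₊ ≥ ∫ (f - f₀)₊`. So whenever `∫ (f̂ - f₀)₊ ≤ εₙ`, every
`f ∈ Θₙ` with `∫ (f - f₀)₊ > εₙ` has likelihood zero and the posterior of that set vanishes;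
otherwise it is at most one. -/

theorem intI_max_eq_add_intPos {f g : ℝ → ℝ} (hf : IntegrableOn f (Icc 0 1))
    (hg : IntegrableOn g (Icc 0 1)) :
    intI (fun x => max (f x) (g x)) = intI g + intPos f g := by
  have hpos : IntegrableOn (fun x => max (f x - g x) 0) (Icc 0 1) := (hf.sub hg).pos_part
  rw [intI, intI, intPos, ← integral_add hg hpos]
  congr 1 with x
  rw [← sub_self (g x), max_sub_sub_right]
  ring

theorem intI_le_add_intPos {f g : ℝ → ℝ} (hf : IntegrableOn f (Icc 0 1))
    (hg : IntegrableOn g (Icc 0 1)) : intI f ≤ intI g + intPos f g := by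
  rw [← intI_max_eq_add_intPos hf hg]
  exact integral_mono hf (hf.sup hg) fun x => le_max_left _ _

theorem ae_le_snd_intensity (n : ℕ) {f : ℝ → ℝ}
    (hf : AEMeasurable f (volume.restrict (Icc 0 1))) :
    ∀ᵐ p ∂intensity n f, f p.1 ≤ p.2 := by
  have hvol : (volume : Measure (ℝ × ℝ)).restrict (Icc 0 1 ×ˢ univ) =
      (volume.restrict (Icc 0 1)).prod volume := by
    rw [Measure.volume_eq_prod, ← Measure.prod_restrict, Measure.restrict_univ]
  have hfst : ∀ᵐ p : ℝ × ℝ ∂(volume.restrict (Icc (0:ℝ) 1)).prod volume, f p.1 = hf.mk f p.1 :=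
    Measure.quasiMeasurePreserving_fst.ae hf.ae_eq_mk
  have hdens : AEMeasurable (fun p : ℝ × ℝ => if f p.1 ≤ p.2 then (n : ℝ≥0∞) else 0)
      ((volume : Measure (ℝ × ℝ)).restrict (Icc 0 1 ×ˢ univ)) := by
    rw [hvol]
    refine (Measurable.aemeasurable
      (f := fun p : ℝ × ℝ => if hf.mk f p.1 ≤ p.2 then (n : ℝ≥0∞) else 0) ?_).congr
      (hfst.mono fun p hp => by simp only [hp])
    exact Measurable.ite (measurableSet_le (hf.measurable_mk.comp measurable_fst) measurable_snd)
      measurable_const measurable_const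
  rw [intensity, ae_withDensity_iff' hdens]
  exact .of_forall fun p hp => by_contra fun h => hp (if_neg h)

theorem IsPoissonPP.ae_forall_of_ae {Ω : Type*} [MeasurableSpace Ω] {μ : Measure (ℝ × ℝ)}
    {P : Measure Ω} {pts : Ω → ℕ → ℝ × ℝ} (hPP : IsPoissonPP μ P pts) {q : ℝ × ℝ → Prop}
    (hq : ∀ᵐ p ∂μ, q p) : ∀ᵐ ω ∂P, ∀ i, q (pts ω i) := by
  obtain ⟨hP, hpts, hvoid⟩ := hPP
  set A := toMeasurable μ {p | ¬ q p}
  have hA : MeasurableSet A := measurableSet_toMeasurable _ _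
  have hμA : μ A = 0 := by rwa [measure_toMeasurable, ← ae_iff]
  have hvoidA : ∀ᵐ ω ∂P, ∀ i, pts ω i ∉ A := by
    have hmeas : MeasurableSet {ω | ∀ i, pts ω i ∉ A} := by
      simp only [ofPred_forall]
      exact .iInter fun i => hpts i hA.compl
    rw [ae_iff_measure_eq hmeas.nullMeasurableSet, hvoid A hA, hμA]
    simp
  filter_upwards [hvoidA] with ω hω i
  exact by_contra fun h => hω i (subset_toMeasurable _ _ h)

section Likelihood

variable {Ω : Type*} {n : ℕ} {pts : Ω → ℕ → ℝ × ℝ} {ω : Ω}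

theorem lik_of_forall_le {f : ℝ → ℝ} (hf : ∀ i, f (pts ω i).1 ≤ (pts ω i).2) :
    lik n pts f ω = ENNReal.ofReal (exp (n * intI f)) :=
  if_pos hf

theorem lik_of_not_forall_le {f : ℝ → ℝ} (hf : ¬ ∀ i, f (pts ω i).1 ≤ (pts ω i).2) :
    lik n pts f ω = 0 :=
  if_neg hf

theorem intI_le_of_lik_le (hn : 0 < n) {f g : ℝ → ℝ} (hf : ∀ i, f (pts ω i).1 ≤ (pts ω i).2)
    (hle : lik n pts f ω ≤ lik n pts g ω) : intI f ≤ intI g := by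
  rw [lik_of_forall_le hf] at hle
  by_cases hg : ∀ i, g (pts ω i).1 ≤ (pts ω i).2
  · rw [lik_of_forall_le hg, ENNReal.ofReal_le_ofReal_iff (exp_pos _).le, exp_le_exp] at hle
    exact le_of_mul_le_mul_left hle (Nat.cast_pos.mpr hn)
  · rw [lik_of_not_forall_le hg, nonpos_iff_eq_zero, ENNReal.ofReal_eq_zero] at hle
    exact absurd hle (exp_pos _).not_ge

theorem intPos_le_of_lik_max_le (hn : 0 < n) {f f₀ g : ℝ → ℝ} (hf : IntegrableOn f (Icc 0 1))
    (hf₀ : IntegrableOn f₀ (Icc 0 1)) (hg : IntegrableOn g (Icc 0 1))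
    (hfω : ∀ i, f (pts ω i).1 ≤ (pts ω i).2) (hf₀ω : ∀ i, f₀ (pts ω i).1 ≤ (pts ω i).2)
    (hle : lik n pts (fun x => max (f x) (f₀ x)) ω ≤ lik n pts g ω) :
    intPos f f₀ ≤ intPos g f₀ := by
  have hint := intI_le_of_lik_le hn (f := fun x => max (f x) (f₀ x))
    (fun i => max_le (hfω i) (hf₀ω i)) hle
  rw [intI_max_eq_add_intPos hf hf₀] at hint
  linarith [intI_le_add_intPos hg hf₀]

end Likelihood

section Posterior

variable {Ω Θ : Type*} [MeasurableSpace Θ] {n : ℕ} {pts : Ω → ℕ → ℝ × ℝ} {Pi : Measure Θ}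
  {ι : Θ → ℝ → ℝ} {B : Set Θ} {ω : Ω}

theorem post_le_one : post n pts Pi ι B ω ≤ 1 :=
  (ENNReal.div_le_div_right (setLIntegral_le_lintegral _ _) _).trans ENNReal.div_self_le_one

theorem post_eq_zero_of_forall_not_le (hι : Measurable (Function.uncurry ι))
    (hB : ∀ θ ∈ B, ¬ ∀ i, ι θ (pts ω i).1 ≤ (pts ω i).2) : post n pts Pi ι B ω = 0 := by
  set D := {θ | ∀ i, ι θ (pts ω i).1 ≤ (pts ω i).2}
  have hD : MeasurableSet D := by
    simp only [D, ofPred_forall]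
    exact .iInter fun i =>
      measurableSet_le (hι.comp (measurable_id.prodMk measurable_const)) measurable_const
  have hlik : (fun θ => lik n pts (ι θ) ω) =
      D.indicator fun θ => ENNReal.ofReal (exp (n * intI (ι θ))) :=
    rfl
  have hDB : D ∩ B = ∅ := eq_empty_of_forall_notMem fun θ hθ => hB θ hθ.2 hθ.1
  rw [post, hlik, setLIntegral_indicator hD, hDB, Measure.restrict_empty, lintegral_zero_measure,
    ENNReal.zero_div]

end Posterior

theorem stmt_8_general {Ω Θ : Type*} [MeasurableSpace Ω] [MeasurableSpace Θ] [TopologicalSpace Θ]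
    (n : ℕ) (hn : 1 ≤ n)
    (P : ℕ → (ℝ → ℝ) → Measure Ω) (pts : Ω → ℕ → ℝ × ℝ)
    (hmodel : IsBoundaryModel P pts)
    (f0 : ℝ → ℝ)
    (Pi : Measure Θ) (ι : Θ → ℝ → ℝ) (hprior : IsL1Prior Pi ι)
    (Θn : Set Θ)
    (hf0mem : ∃ θ0 ∈ Θn, ι θ0 = f0)
    (hmax : ∀ θ1 ∈ Θn, ∀ θ2 ∈ Θn, ∃ θ ∈ Θn, ι θ = fun x => max (ι θ1 x) (ι θ2 x))
    (θMLE : Ω → Θ)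
    (hMLE : ∀ ω, ∀ θ ∈ Θn, lik n pts (ι θ) ω ≤ lik n pts (ι (θMLE ω)) ω)
    (εn : ℝ) :
    ∫⁻ ω, post n pts Pi ι {θ ∈ Θn | εn < intPos (ι θ) f0} ω ∂(P n f0) ≤
      P n f0 {ω | εn < intPos (ι (θMLE ω)) f0} := by
  obtain ⟨θ0, hθ0, rfl⟩ := hf0mem
  obtain ⟨-, hι, hιint, -⟩ := hprior
  set S := {ω | εn < intPos (ι (θMLE ω)) (ι θ0)}
  have hdata : ∀ᵐ ω ∂P n (ι θ0), ∀ i, ι θ0 (pts ω i).1 ≤ (pts ω i).2 :=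
    (hmodel n _ (hιint θ0)).ae_forall_of_ae (ae_le_snd_intensity n (hιint θ0).aemeasurable)
  have hpost : ∀ᵐ ω ∂P n (ι θ0),
      post n pts Pi ι {θ ∈ Θn | εn < intPos (ι θ) (ι θ0)} ω ≤ S.indicator (fun _ => 1) ω := by
    filter_upwards [hdata] with ω hω
    by_cases hS : ω ∈ S
    · simpa [hS] using post_le_one
    refine (post_eq_zero_of_forall_not_le hι fun θ hθB hθω => hS ?_).trans_le zero_le
    obtain ⟨hθ, hθε⟩ := hθB
    obtain ⟨θ', hθ', hθ'max⟩ := hmax θ hθ θ0 hθ0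
    have hle := hMLE ω θ' hθ'
    rw [hθ'max] at hle
    exact hθε.trans_le (intPos_le_of_lik_max_le hn (hιint θ) (hιint θ0) (hιint _) hθω hω hle)
  calc _ ≤ ∫⁻ ω, S.indicator (fun _ => 1) ω ∂P n (ι θ0) := lintegral_mono_ae hpost
    _ ≤ P n (ι θ0) S := by simpa using lintegral_indicator_const_le S 1

/-- Lemma 2.7: posterior contraction from the MLE.
If `Θₙ ⊆ Θ` contains `f₀`, is closed under pairwise maxima, and a maximum likelihood
estimator over `Θₙ` exists, then
`E_{f₀}[Π(f ∈ Θₙ : ∫(f-f₀)₊ > εₙ | N)] ≤ P_{f₀}(∫(f̂^MLE - f₀)₊ > εₙ)`. -/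
theorem stmt_8 {Ω Θ : Type*} [MeasurableSpace Ω] [MeasurableSpace Θ] [TopologicalSpace Θ]
    [PolishSpace Θ] [BorelSpace Θ] (n : ℕ) (hn : 1 ≤ n)
    (P : ℕ → (ℝ → ℝ) → Measure Ω) (pts : Ω → ℕ → ℝ × ℝ)
    (hmodel : IsBoundaryModel P pts)
    (f0 : ℝ → ℝ) (hf0 : IntegrableOn f0 (Set.Icc (0:ℝ) 1))
    (Pi : Measure Θ) (ι : Θ → ℝ → ℝ) (hprior : IsL1Prior Pi ι)
    (Θn : Set Θ)
    (hf0mem : ∃ θ0 ∈ Θn, ι θ0 = f0)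
    (hmax : ∀ θ1 ∈ Θn, ∀ θ2 ∈ Θn, ∃ θ ∈ Θn, ι θ = fun x => max (ι θ1 x) (ι θ2 x))
    (θMLE : Ω → Θ) (hMLEmem : ∀ ω, θMLE ω ∈ Θn)
    (hMLE : ∀ ω, ∀ θ ∈ Θn, lik n pts (ι θ) ω ≤ lik n pts (ι (θMLE ω)) ω)
    (εn : ℝ) (hεn : 0 < εn) :
    ∫⁻ ω, post n pts Pi ι {θ ∈ Θn | εn < intPos (ι θ) f0} ω ∂(P n f0) ≤
      P n f0 {ω | εn < intPos (ι (θMLE ω)) f0} :=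
  stmt_8_general n hn P pts hmodel f0 Pi ι hprior Θn hf0mem hmax θMLE hMLE εn

end
end
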